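/- arXiv:1411.2003 — 2 statements merged into one kernel-verified Lean document; each statement's English description precedes it below -/
import Mathlib

section
/- For all positive integers N ≥ 2 and k with 1 ≤ k ≤ N−1, the inequality ψ(N) − ψ(k) − 1/k ≤ log(N−1) + (k−1)/k holds. -/
/-!
At positive integers `ψ (n + 1) = -γ + H n` (harmonic numbers), so the left-hand side equals
`H (N - 1) - H k`, which is at most `log (N - 1)` because `H (N - 1) ≤ 1 + log (N - 1)` and
`1 ≤ H k`.
-/

open Real MeasureTheory Set

noncomputable def digamma (x : ℝ) : ℝ := deriv (fun y => Real.log (Real.Gamma y)) x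

theorem digamma_natCast_add_one (n : ℕ) :
    digamma (n + 1) = -eulerMascheroniConstant + harmonic n := by
  rw [digamma, deriv.log (differentiableAt_Gamma fun m ↦ by linarith) (by positivity),
    deriv_Gamma_nat, Gamma_nat_eq_factorial, mul_div_cancel_left₀ _ (by positivity)]

theorem one_le_harmonic {n : ℕ} (hn : n ≠ 0) : 1 ≤ harmonic n := by
  rw [harmonic_eq_sum_Icc]
  simpa using Finset.single_le_sum (f := fun i : ℕ ↦ ((i : ℚ))⁻¹) (fun i _ ↦ by positivity)
    (Finset.left_mem_Icc.mpr (Nat.one_le_iff_ne_zero.mpr hn))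

theorem digamma_ineq_general (N k : ℕ) (hN : 2 ≤ N) (hk : 1 ≤ k) :
    digamma N - digamma k - 1 / (k : ℝ) ≤
      Real.log ((N : ℝ) - 1) + ((k : ℝ) - 1) / (k : ℝ) := by
  obtain ⟨n, rfl⟩ : ∃ n, N = n + 1 := ⟨N - 1, by omega⟩
  obtain ⟨j, rfl⟩ : ∃ j, k = j + 1 := ⟨k - 1, by omega⟩
  push_cast
  have hHk : (harmonic (j + 1) : ℝ) = harmonic j + 1 / (j + 1) := by
    push_cast [harmonic_succ]; ring
  have hupper := harmonic_le_one_add_log n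
  have hlower : (1 : ℝ) ≤ harmonic (j + 1) := by exact_mod_cast one_le_harmonic j.succ_ne_zero
  have hfrac : 0 ≤ ((j : ℝ) + 1 - 1) / (j + 1) := by simp only [add_sub_cancel_right]; positivity
  rw [digamma_natCast_add_one, digamma_natCast_add_one, add_sub_cancel_right]
  linarith

theorem digamma_ineq (N k : ℕ) (hN : 2 ≤ N) (hk : 1 ≤ k) (hkN : k ≤ N - 1) :
    digamma N - digamma k - 1 / (k : ℝ) ≤
      Real.log ((N : ℝ) - 1) + ((k : ℝ) - 1) / (k : ℝ) :=
  digamma_ineq_general N k hN hk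
end

section
/- For x > 0, the Gamma function satisfies Γ(x+1) < √(2π) · ((x + 1/2)/e)^{x + 1/2}. -/
/-!
Write `g x = log Γ(x + 1) - ((x + 1/2) log (x + 1/2) - (x + 1/2))`, the logarithm of `Γ(x + 1)`
divided by `((x + 1/2)/e)^(x + 1/2)`. By `Γ(x + 2) = (x + 1) Γ(x + 1)`, the increment
`g (x + 1) - g x` is `log (x + 1)` minus the mean of `log` over `[x + 1/2, x + 3/2]`, which is
positive by strict concavity of `log`. On the other hand `g (x + n) → log √(2π)`: Euler's limit
formula reduces `Γ(x + n + 1)` to `n! n^x`, and Stirling's formula handles `n!`. So the increasing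
sequence `g (x + n)` starts strictly below its limit.
-/

open Real Filter Topology
open scoped Nat

theorem mul_log_one_add_sub_mul_log_one_sub_lt_two_mul {t : ℝ} (ht₀ : 0 < t) (ht₁ : t < 1) :
    (1 + t) * log (1 + t) - (1 - t) * log (1 - t) < 2 * t := by
  let h : ℝ → ℝ := fun s ↦ (1 + s) * log (1 + s) - (1 - s) * log (1 - s) - 2 * s
  have hderiv : ∀ s ∈ Set.Ioo (-1 : ℝ) 1, HasDerivAt h (log ((1 + s) * (1 - s))) s := by
    rintro s ⟨hs₁, hs₂⟩
    have hp : 1 + s ≠ 0 := by linarith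
    have hm : 1 - s ≠ 0 := by linarith
    have := ((((hasDerivAt_id s).const_add 1).mul (((hasDerivAt_id s).const_add 1).log hp)).sub
      (((hasDerivAt_id s).const_sub 1).mul (((hasDerivAt_id s).const_sub 1).log hm))).sub
      ((hasDerivAt_id s).const_mul 2)
    refine this.congr_deriv ?_
    simp only [id, log_mul hp hm]
    field_simp
    ring
  have hanti : StrictAntiOn h (Set.Ico 0 1) := by
    refine strictAntiOn_of_deriv_neg (convex_Ico 0 1)
      (fun s hs ↦ (hderiv s ⟨by linarith [hs.1], hs.2⟩).continuousAt.continuousWithinAt) ?_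
    rw [interior_Ico]
    rintro s ⟨hs₁, hs₂⟩
    rw [(hderiv s ⟨by linarith, hs₂⟩).deriv]
    exact log_neg (by nlinarith) (by nlinarith)
  simpa [h] using hanti ⟨le_rfl, one_pos⟩ ⟨ht₀.le, ht₁⟩ ht₀

theorem add_half_mul_log_sub_sub_half_mul_log_lt {a : ℝ} (ha : 1 / 2 < a) :
    (a + 1 / 2) * log (a + 1 / 2) - (a - 1 / 2) * log (a - 1 / 2) < 1 + log a := by
  have ha₀ : 0 < a := by linarith
  have key := mul_log_one_add_sub_mul_log_one_sub_lt_two_mul (t := 1 / (2 * a)) (by positivity)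
    (by rw [div_lt_one (by positivity)]; linarith)
  rw [show 1 + 1 / (2 * a) = (a + 1 / 2) / a by field_simp,
    show 1 - 1 / (2 * a) = (a - 1 / 2) / a by field_simp,
    log_div (by linarith) ha₀.ne', log_div (by linarith) ha₀.ne', div_mul_eq_mul_div,
    div_mul_eq_mul_div, ← sub_div, div_lt_iff₀ ha₀] at key
  have : 2 * (1 / (2 * a)) * a = 1 := by field_simp
  linarith

theorem log_Gamma_add_one {y : ℝ} (hy : 0 < y) :
    log (Gamma (y + 1)) = log (Gamma y) + log y := by
  rw [Gamma_add_one hy.ne', log_mul hy.ne' (Gamma_pos_of_pos hy).ne', add_comm]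

noncomputable def logGammaStirlingGap (x : ℝ) : ℝ :=
  log (Gamma (x + 1)) - ((x + 1 / 2) * log (x + 1 / 2) - (x + 1 / 2))

theorem logGammaStirlingGap_lt_add_one {x : ℝ} (hx : -1 / 2 < x) :
    logGammaStirlingGap x < logGammaStirlingGap (x + 1) := by
  have hx₁ : 0 < x + 1 := by linarith
  have key := add_half_mul_log_sub_sub_half_mul_log_lt (a := x + 1) (by linarith)
  rw [show x + 1 - 1 / 2 = x + 1 / 2 by ring] at key
  rw [logGammaStirlingGap, logGammaStirlingGap, log_Gamma_add_one hx₁]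
  linarith

theorem tendsto_add_mul_log_add_sub_log (d : ℝ) :
    Tendsto (fun x : ℝ ↦ (x + d) * (log (x + d) - log x)) atTop (𝓝 d) := by
  have h := (tendsto_mul_log_one_add_div_atTop d).add
    ((tendsto_log_comp_add_sub_log d).const_mul d)
  rw [mul_zero, add_zero] at h
  refine h.congr' ?_
  filter_upwards [eventually_gt_atTop 0, eventually_gt_atTop (-d)] with x hx₀ hxd
  rw [← log_div (by linarith) hx₀.ne', one_add_div hx₀.ne']
  ring

theorem tendsto_log_factorial_sub_stirling (c : ℝ) :
    Tendsto (fun n : ℕ ↦ c * log n + log n ! -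
        ((n + c + 1 / 2) * log (n + c + 1 / 2) - (n + c + 1 / 2)))
      atTop (𝓝 (log √(2 * π))) := by
  set d := c + 1 / 2
  have hS : Tendsto (fun n : ℕ ↦ log (Stirling.stirlingSeq n)) atTop (𝓝 (log √π)) :=
    ((continuousAt_log (by positivity)).tendsto).comp Stirling.tendsto_stirlingSeq_sqrt_pi
  have h := (hS.add_const (log 2 / 2 + d)).sub
    ((tendsto_add_mul_log_add_sub_log d).comp tendsto_natCast_atTop_atTop)
  have hlim : log √π + (log 2 / 2 + d) - d = log √(2 * π) := by
    rw [log_sqrt pi_pos.le, log_sqrt (by positivity), log_mul two_ne_zero pi_ne_zero]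
    ring
  rw [hlim] at h
  refine h.congr' ?_
  filter_upwards [eventually_gt_atTop 0] with n hn
  have hn' : (0 : ℝ) < n := by exact_mod_cast hn
  simp only [Function.comp_apply, Stirling.log_stirlingSeq_formula, log_mul two_ne_zero hn'.ne',
    log_div hn'.ne' (exp_pos 1).ne', log_exp]
  rw [show (n : ℝ) + c + 1 / 2 = n + d by ring]
  ring

theorem log_Gamma_add_nat_add_one {y : ℝ} (hy : 0 < y) (n : ℕ) :
    log (Gamma (y + (n + 1))) =
      log (Gamma y) - BohrMollerup.logGammaSeq y n + (y * log n + log n !) := by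
  have h := BohrMollerup.f_add_nat_eq (f := log ∘ Gamma) (fun hz ↦ log_Gamma_add_one hz) hy (n + 1)
  rw [Nat.cast_add_one] at h
  simp only [Function.comp_apply] at h
  rw [h, BohrMollerup.logGammaSeq]
  ring

theorem tendsto_logGammaStirlingGap_add_nat {x : ℝ} (hx : -1 < x) :
    Tendsto (fun n : ℕ ↦ logGammaStirlingGap (x + n)) atTop (𝓝 (log √(2 * π))) := by
  have hy : 0 < x + 1 := by linarith
  have h := ((BohrMollerup.tendsto_log_gamma hy).const_sub (log (Gamma (x + 1)))).add
    (tendsto_log_factorial_sub_stirling (x + 1))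
  rw [sub_self, zero_add] at h
  rw [← tendsto_add_atTop_iff_nat 1]
  refine h.congr fun n ↦ ?_
  rw [logGammaStirlingGap, Nat.cast_add_one, show x + (n + 1) + 1 = x + 1 + (n + 1) by ring,
    show x + (n + 1) + 1 / 2 = n + (x + 1) + 1 / 2 by ring, log_Gamma_add_nat_add_one hy]
  ring

theorem logGammaStirlingGap_lt {x : ℝ} (hx : -1 / 2 < x) :
    logGammaStirlingGap x < log √(2 * π) := by
  have hmono : StrictMono fun n : ℕ ↦ logGammaStirlingGap (x + n) :=
    strictMono_nat_of_lt_succ fun n ↦ by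
      rw [Nat.cast_add_one, ← add_assoc]
      exact logGammaStirlingGap_lt_add_one (by linarith [n.cast_nonneg (α := ℝ)])
  calc logGammaStirlingGap x = logGammaStirlingGap (x + (0 : ℕ)) := by simp
    _ < logGammaStirlingGap (x + (1 : ℕ)) := hmono one_pos
    _ ≤ log √(2 * π) := hmono.monotone.ge_of_tendsto (tendsto_logGammaStirlingGap_add_nat
      (by linarith)) 1

theorem gamma_upper_bound (x : ℝ) (hx : 0 < x) :
    Real.Gamma (x + 1) <
      Real.sqrt (2 * Real.pi) * ((x + 1 / 2) / Real.exp 1) ^ (x + 1 / 2) := by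
  have hx' : 0 < x + 1 / 2 := by linarith
  have hΓ : 0 < Gamma (x + 1) := Gamma_pos_of_pos (by linarith)
  have hgap := logGammaStirlingGap_lt (x := x) (by linarith)
  rw [logGammaStirlingGap, sub_lt_iff_lt_add] at hgap
  rw [← log_lt_log_iff hΓ (by positivity), log_mul (by positivity) (by positivity),
    log_rpow (by positivity), log_div hx'.ne' (exp_pos 1).ne', log_exp]
  linarith
end
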